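/- arXiv:1703.07620 — 6 statements merged into one kernel-verified Lean document; each statement's English description precedes it below -/
import Mathlib

section
/- If (a,b,c) is a positive integer solution of x^2 + y^2 + z^2 = 3xyz with c ≥ a and c ≥ b, then 3bc - a ≥ 2a and 3ac - b ≥ 2b. -/
theorem two_mul_le_three_mul_mul_sub {a b c : ℤ} (ha : 0 < a) (hb : 0 < b) (hac : a ≤ c) :
    2 * a ≤ 3 * b * c - a := by
  have hc_le : c ≤ b * c := le_mul_of_one_le_left (ha.le.trans hac) hb
  linarith

theorem markov_mutation_ge_general (a b c : ℤ) (ha : 0 < a) (hb : 0 < b)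
    (hca : a ≤ c) (hcb : b ≤ c) :
    3 * b * c - a ≥ 2 * a ∧ 3 * a * c - b ≥ 2 * b :=
  ⟨two_mul_le_three_mul_mul_sub ha hb hca, two_mul_le_three_mul_mul_sub hb ha hcb⟩

/-- For a positive Markov triple (a,b,c) with c maximal,
3bc - a ≥ 2a and 3ac - b ≥ 2b. -/
theorem markov_mutation_ge (a b c : ℤ) (ha : 0 < a) (hb : 0 < b) (hc : 0 < c)
    (hca : a ≤ c) (hcb : b ≤ c)
    (h : a ^ 2 + b ^ 2 + c ^ 2 = 3 * a * b * c) :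
    3 * b * c - a ≥ 2 * a ∧ 3 * a * c - b ≥ 2 * b :=
  markov_mutation_ge_general a b c ha hb hca hcb
end

section
/- For any positive integer solution (a1,a2,a3) of x^2+y^2+z^2=3xyz with a3 ≥ a1 and a3 ≥ a2, the inequality sqrt((3 a3)^2 - 4) > |3 a3 - 2 a1 / a2| holds in the reals. -/
/-! For a solution of `x² + y² + z² = 3xyz` with `y ≠ 0`, the gap
`(3z)² - 4 - (3z - 2x/y)²` equals `(2z/y)²`: clearing the denominator `y²` leaves
`4(3xyz - x² - y²) = 4z²`. So the gap is positive as soon as `z ≠ 0`. -/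

theorem markov_sq_sub_sq_eq {K : Type*} [Field K] {x y z : K} (hy : y ≠ 0)
    (h : x ^ 2 + y ^ 2 + z ^ 2 = 3 * x * y * z) :
    (3 * z) ^ 2 - 4 - (3 * z - 2 * x / y) ^ 2 = (2 * z / y) ^ 2 := by
  field_simp
  linear_combination (-4 : K) * h

theorem abs_lt_sqrt_of_markov {x y z : ℝ} (hy : y ≠ 0) (hz : z ≠ 0)
    (h : x ^ 2 + y ^ 2 + z ^ 2 = 3 * x * y * z) :
    |3 * z - 2 * x / y| < √((3 * z) ^ 2 - 4) := by
  rw [Real.lt_sqrt (abs_nonneg _), sq_abs]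
  have hgap := markov_sq_sub_sq_eq hy h
  have hpos : 0 < (2 * z / y) ^ 2 := by positivity
  linarith

theorem markov_slope_bound_general (a1 a2 a3 : ℤ) (h2 : 0 < a2) (h3 : 0 < a3)
    (h : a1 ^ 2 + a2 ^ 2 + a3 ^ 2 = 3 * a1 * a2 * a3) :
    Real.sqrt ((3 * (a3 : ℝ)) ^ 2 - 4) > |3 * (a3 : ℝ) - 2 * (a1 : ℝ) / (a2 : ℝ)| :=
  abs_lt_sqrt_of_markov (by positivity) (by positivity) (by exact_mod_cast h)

/-- For a positive Markov triple (a1,a2,a3) with a3 maximal,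
sqrt((3 a3)^2 - 4) > |3 a3 - 2 a1 / a2| over the reals. -/
theorem markov_slope_bound (a1 a2 a3 : ℤ) (h1 : 0 < a1) (h2 : 0 < a2) (h3 : 0 < a3)
    (h31 : a1 ≤ a3) (h32 : a2 ≤ a3)
    (h : a1 ^ 2 + a2 ^ 2 + a3 ^ 2 = 3 * a1 * a2 * a3) :
    Real.sqrt ((3 * (a3 : ℝ)) ^ 2 - 4) > |3 * (a3 : ℝ) - 2 * (a1 : ℝ) / (a2 : ℝ)| :=
  markov_slope_bound_general a1 a2 a3 h2 h3 h
end

section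
/- For any positive integer solution (a1,a2,a3) of x^2+y^2+z^2=3xyz with a3 maximal, setting s = 3 a3, the real number s - a1/a2 lies strictly between (s - sqrt(s^2-4))/2 and (s + sqrt(s^2-4))/2. -/
/-!
Put `r = a1 / a2` and `s = 3 a3`. Dividing the Markov equation by `a2 ^ 2` gives
`r ^ 2 - s r + 1 = -(a3 / a2) ^ 2 < 0`, and the same value is taken at `s - r`. So `s - r` lies
strictly between the two roots `(s ± √(s ^ 2 - 4)) / 2` of `t ^ 2 - s t + 1`.
-/

open Real

theorem mem_roots_interval_of_sq_sub_mul_add_one_neg {s t : ℝ} (ht : t ^ 2 - s * t + 1 < 0) :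
    (s - √(s ^ 2 - 4)) / 2 < t ∧ t < (s + √(s ^ 2 - 4)) / 2 := by
  have hsq : |2 * t - s| ^ 2 < s ^ 2 - 4 := by rw [sq_abs]; linarith
  have habs : |2 * t - s| < √(s ^ 2 - 4) := Real.lt_sqrt (abs_nonneg _) |>.mpr hsq
  obtain ⟨hlow, hup⟩ := abs_lt.mp habs
  constructor <;> linarith

theorem div_sq_sub_mul_div_add_one_neg_of_markov {x y z : ℝ} (hy : y ≠ 0) (hz : z ≠ 0)
    (h : x ^ 2 + y ^ 2 + z ^ 2 = 3 * x * y * z) :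
    (x / y) ^ 2 - 3 * z * (x / y) + 1 < 0 := by
  have hval : (x / y) ^ 2 - 3 * z * (x / y) + 1 = -(z / y) ^ 2 := by
    field_simp
    linear_combination h
  rw [hval, neg_lt_zero]
  exact pow_two_pos_of_ne_zero (div_ne_zero hz hy)

theorem markov_slope_between_general (a1 a2 a3 : ℤ) (h2 : 0 < a2) (h3 : 0 < a3)
    (h : a1 ^ 2 + a2 ^ 2 + a3 ^ 2 = 3 * a1 * a2 * a3) :
    ((3 * (a3 : ℝ)) - Real.sqrt ((3 * (a3 : ℝ)) ^ 2 - 4)) / 2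
      < 3 * (a3 : ℝ) - (a1 : ℝ) / (a2 : ℝ) ∧
    3 * (a3 : ℝ) - (a1 : ℝ) / (a2 : ℝ)
      < ((3 * (a3 : ℝ)) + Real.sqrt ((3 * (a3 : ℝ)) ^ 2 - 4)) / 2 := by
  have hr := div_sq_sub_mul_div_add_one_neg_of_markov (x := (a1 : ℝ))
    (by positivity : (a2 : ℝ) ≠ 0) (by positivity : (a3 : ℝ) ≠ 0) (by exact_mod_cast h)
  apply mem_roots_interval_of_sq_sub_mul_add_one_neg
  linear_combination hr

/-- For a positive Markov triple (a1,a2,a3) with a3 maximal and s = 3 a3,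
s - a1/a2 lies strictly between (s - sqrt(s^2-4))/2 and (s + sqrt(s^2-4))/2. -/
theorem markov_slope_between (a1 a2 a3 : ℤ) (h1 : 0 < a1) (h2 : 0 < a2) (h3 : 0 < a3)
    (h31 : a1 ≤ a3) (h32 : a2 ≤ a3)
    (h : a1 ^ 2 + a2 ^ 2 + a3 ^ 2 = 3 * a1 * a2 * a3) :
    ((3 * (a3 : ℝ)) - Real.sqrt ((3 * (a3 : ℝ)) ^ 2 - 4)) / 2
      < 3 * (a3 : ℝ) - (a1 : ℝ) / (a2 : ℝ) ∧
    3 * (a3 : ℝ) - (a1 : ℝ) / (a2 : ℝ)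
      < ((3 * (a3 : ℝ)) + Real.sqrt ((3 * (a3 : ℝ)) ^ 2 - 4)) / 2 :=
  markov_slope_between_general a1 a2 a3 h2 h3 h
end

section
/- For any positive integer solution (a1,a2,a3) of x^2+y^2+z^2=3xyz with a3 maximal, setting s = 3 a3, the real number a1/(s·a1 - a2) lies strictly between (s - sqrt(s^2-4))/2 and (s + sqrt(s^2-4))/2. -/
/-!
Flipping `a2` to `D = 3 a3 a1 - a2` (the other root of the Markov equation in that variable)
gives the Markov triple `(a1, D, a3)`; in particular `D ≠ 0`, or else `a1² + a3² = 0`. Dividing its equation by `D²` shows that `x = a1 / D`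
satisfies `x² - s x + 1 = -(a3 / D)² < 0`, so `x` lies strictly between the roots of
`t² - s t + 1`.
-/

theorem markov_vieta_flip {R : Type*} [CommRing R] {a b c : R}
    (h : a ^ 2 + b ^ 2 + c ^ 2 = 3 * a * b * c) :
    a ^ 2 + (3 * c * a - b) ^ 2 + c ^ 2 = 3 * a * (3 * c * a - b) * c := by
  linear_combination h

theorem between_roots_of_sq_sub_mul_add_neg {s c t : ℝ} (h : t ^ 2 - s * t + c < 0) :
    (s - √(s ^ 2 - 4 * c)) / 2 < t ∧ t < (s + √(s ^ 2 - 4 * c)) / 2 := by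
  have hsq : (2 * t - s) ^ 2 < √(s ^ 2 - 4 * c) ^ 2 := by
    rw [Real.sq_sqrt (by nlinarith [sq_nonneg (2 * t - s)])]
    linarith
  have habs := abs_lt.mp (abs_lt_of_sq_lt_sq hsq (Real.sqrt_nonneg _))
  constructor <;> linarith [habs.1, habs.2]

theorem markov_ratio_sq_sub_mul_add_one_neg {a b c : ℝ} (hc : c ≠ 0)
    (h : a ^ 2 + b ^ 2 + c ^ 2 = 3 * a * b * c) :
    (a / (3 * c * a - b)) ^ 2 - 3 * c * (a / (3 * c * a - b)) + 1 < 0 := by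
  have hflip := markov_vieta_flip h
  set D := 3 * c * a - b
  have hD : D ≠ 0 := by
    intro hD0
    rw [hD0] at hflip
    exact hc (by nlinarith [sq_nonneg a, sq_nonneg c])
  have hvalue : (a / D) ^ 2 - 3 * c * (a / D) + 1 = -(c / D) ^ 2 := by
    field_simp
    linear_combination hflip
  rw [hvalue, neg_lt_zero]
  positivity

theorem markov_slope_between'_general (a1 a2 a3 : ℤ) (h3 : 0 < a3)
    (h : a1 ^ 2 + a2 ^ 2 + a3 ^ 2 = 3 * a1 * a2 * a3) :
    ((3 * (a3 : ℝ)) - Real.sqrt ((3 * (a3 : ℝ)) ^ 2 - 4)) / 2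
      < (a1 : ℝ) / (3 * (a3 : ℝ) * (a1 : ℝ) - (a2 : ℝ)) ∧
    (a1 : ℝ) / (3 * (a3 : ℝ) * (a1 : ℝ) - (a2 : ℝ))
      < ((3 * (a3 : ℝ)) + Real.sqrt ((3 * (a3 : ℝ)) ^ 2 - 4)) / 2 := by
  have hreal : (a1 : ℝ) ^ 2 + (a2 : ℝ) ^ 2 + (a3 : ℝ) ^ 2 = 3 * a1 * a2 * a3 := by
    exact_mod_cast h
  have ha3 : (a3 : ℝ) ≠ 0 := by positivity
  simpa only [mul_one] using
    between_roots_of_sq_sub_mul_add_neg (markov_ratio_sq_sub_mul_add_one_neg ha3 hreal)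

/-- For a positive Markov triple (a1,a2,a3) with a3 maximal and s = 3 a3,
a1/(s·a1 - a2) lies strictly between (s - sqrt(s^2-4))/2 and (s + sqrt(s^2-4))/2. -/
theorem markov_slope_between' (a1 a2 a3 : ℤ) (h1 : 0 < a1) (h2 : 0 < a2) (h3 : 0 < a3)
    (h31 : a1 ≤ a3) (h32 : a2 ≤ a3)
    (h : a1 ^ 2 + a2 ^ 2 + a3 ^ 2 = 3 * a1 * a2 * a3) :
    ((3 * (a3 : ℝ)) - Real.sqrt ((3 * (a3 : ℝ)) ^ 2 - 4)) / 2
      < (a1 : ℝ) / (3 * (a3 : ℝ) * (a1 : ℝ) - (a2 : ℝ)) ∧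
    (a1 : ℝ) / (3 * (a3 : ℝ) * (a1 : ℝ) - (a2 : ℝ))
      < ((3 * (a3 : ℝ)) + Real.sqrt ((3 * (a3 : ℝ)) ^ 2 - 4)) / 2 :=
  markov_slope_between'_general a1 a2 a3 h3 h
end

section
/- Let (a,b,c) be a positive integer solution of x^2+y^2+z^2=3xyz with c ≥ a, c ≥ b, and (a,b,c) ≠ (1,1,1). Then 3ab - c < c, i.e., mutating at the maximal entry strictly decreases it. -/
/-! The mutation c' = 3ab - c is the other root of t² - 3ab t + (a² + b²), so
(c - t)(c' - t) equals that quadratic at every t. If c ≤ c' and a ≤ b ≤ c, then evaluating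
at t = b gives a² + 2b² - 3ab² ≥ 0, which forces a = b = 1; the only triples left are
(1,1,1) and (1,1,2), and the latter mutates to (1,1,1). -/

theorem markov_sub_mul_mutation_sub {a b c : ℤ} (h : a ^ 2 + b ^ 2 + c ^ 2 = 3 * a * b * c)
    (t : ℤ) : (c - t) * (3 * a * b - c - t) = t ^ 2 - 3 * a * b * t + a ^ 2 + b ^ 2 := by
  linear_combination -h

theorem markov_eq_one_of_le_mutation {a b c : ℤ} (ha : 0 < a) (hab : a ≤ b) (hbc : b ≤ c)
    (h : a ^ 2 + b ^ 2 + c ^ 2 = 3 * a * b * c) (hle : c ≤ 3 * a * b - c) :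
    a = 1 ∧ b = 1 := by
  have hquad : 0 ≤ b ^ 2 - 3 * a * b * b + a ^ 2 + b ^ 2 := by
    rw [← markov_sub_mul_mutation_sub h b]
    exact mul_nonneg (by linarith) (by linarith)
  have hb : 0 < b := ha.trans_le hab
  have ha1 : a = 1 := by nlinarith [mul_pos hb hb, mul_le_mul hab hab ha.le hb.le]
  subst ha1
  exact ⟨rfl, by nlinarith⟩

theorem markov_descent_general (a b c : ℤ) (ha : 0 < a) (hb : 0 < b)
    (hca : a ≤ c) (hcb : b ≤ c) (hne : (a, b, c) ≠ (1, 1, 1))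
    (h : a ^ 2 + b ^ 2 + c ^ 2 = 3 * a * b * c) :
    3 * a * b - c < c := by
  by_contra! hle
  obtain ⟨rfl, rfl⟩ : a = 1 ∧ b = 1 := by
    rcases le_total a b with hab | hba
    · exact markov_eq_one_of_le_mutation ha hab hcb h hle
    · exact (markov_eq_one_of_le_mutation hb hba hca (by linarith) (by linarith)).symm
  have hc : (c - 1) * (c - 2) = 0 := by linear_combination h
  rcases mul_eq_zero.mp hc with hc1 | hc2
  · exact hne (by rw [sub_eq_zero.mp hc1])
  · linarith [sub_eq_zero.mp hc2]

/-- For a positive Markov triple (a,b,c) with c maximal and (a,b,c) ≠ (1,1,1),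
mutating at the maximal entry strictly decreases it: 3ab - c < c. -/
theorem markov_descent (a b c : ℤ) (ha : 0 < a) (hb : 0 < b) (hc : 0 < c)
    (hca : a ≤ c) (hcb : b ≤ c) (hne : (a, b, c) ≠ (1, 1, 1))
    (h : a ^ 2 + b ^ 2 + c ^ 2 = 3 * a * b * c) :
    3 * a * b - c < c :=
  markov_descent_general a b c ha hb hca hcb hne h
end

section
/- Every positive integer solution of x^2+y^2+z^2 = 3xyz can be obtained from (1,1,1) by a finite sequence of moves, each of which replaces one entry a of the triple (a,b,c) by 3bc - a (where b, c are the other two entries) or permutes the entries. -/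
/-!
Markov descent. Fixing two entries `b, c`, the first entry is a root of
`X ^ 2 - 3bc X + (b ^ 2 + c ^ 2)`, and the Vieta move swaps the two roots `a` and `3bc - a`;
their product `b ^ 2 + c ^ 2` is positive, so the move preserves positive solutions. If `a` is the
largest entry and the triple is not `(1, 1, 1)`, then `b` lies between the two roots, so the move
strictly decreases `a`. Hence, after sorting, repeated moves decrease `a + b + c` until `(1, 1, 1)`
is reached, and reading the chain backwards gives the theorem.
-/

/-- One elementary move on triples: a Vieta involution in some coordinate,
or a transposition of two coordinates. -/
def MarkovStep : ℤ × ℤ × ℤ → ℤ × ℤ × ℤ → Prop := fun p q =>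
  match p with
  | (a, b, c) =>
      q = (3 * b * c - a, b, c) ∨
      q = (a, 3 * a * c - b, c) ∨
      q = (a, b, 3 * a * b - c) ∨
      q = (b, a, c) ∨
      q = (a, c, b)

theorem forall_of_sorted {α : Type*} [LinearOrder α] {P : α → α → α → Prop}
    (swap₁₂ : ∀ {a b c}, P a b c → P b a c) (swap₂₃ : ∀ {a b c}, P a b c → P a c b)
    (sorted : ∀ {a b c}, c ≤ b → b ≤ a → P a b c) (a b c : α) : P a b c := by
  rcases le_total c b with hcb | hbc <;> rcases le_total b a with hba | hab <;>
    rcases le_total c a with hca | hac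
  · exact sorted hcb hba
  · exact sorted hcb hba
  · exact swap₁₂ (sorted hca hab)
  · exact swap₁₂ (swap₂₃ (sorted hac hcb))
  · exact swap₂₃ (sorted hbc hca)
  · exact swap₂₃ (swap₁₂ (sorted hba hac))
  · exact swap₂₃ (swap₁₂ (swap₂₃ (sorted hab hbc)))
  · exact swap₂₃ (swap₁₂ (swap₂₃ (sorted hab hbc)))

namespace MarkovStep

theorem swap₁₂ (a b c : ℤ) : MarkovStep (a, b, c) (b, a, c) :=
  Or.inr <| Or.inr <| Or.inr <| Or.inl rfl

theorem swap₂₃ (a b c : ℤ) : MarkovStep (a, b, c) (a, c, b) :=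
  Or.inr <| Or.inr <| Or.inr <| Or.inr rfl

theorem vieta₁ (a b c : ℤ) : MarkovStep (3 * b * c - a, b, c) (a, b, c) :=
  Or.inl <| by rw [sub_sub_cancel]

end MarkovStep

def IsMarkovTriple (a b c : ℤ) : Prop :=
  0 < a ∧ 0 < b ∧ 0 < c ∧ a ^ 2 + b ^ 2 + c ^ 2 = 3 * a * b * c

namespace IsMarkovTriple

variable {a b c : ℤ}

theorem swap₁₂ (h : IsMarkovTriple a b c) : IsMarkovTriple b a c := by
  obtain ⟨ha, hb, hc, h⟩ := h
  exact ⟨hb, ha, hc, by linear_combination h⟩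

theorem swap₂₃ (h : IsMarkovTriple a b c) : IsMarkovTriple a c b := by
  obtain ⟨ha, hb, hc, h⟩ := h
  exact ⟨ha, hc, hb, by linear_combination h⟩

theorem vieta₁ (h : IsMarkovTriple a b c) : IsMarkovTriple (3 * b * c - a) b c := by
  obtain ⟨ha, hb, hc, h⟩ := h
  have hprod : a * (3 * b * c - a) = b ^ 2 + c ^ 2 := by linear_combination -h
  have hpos : 0 < 3 * b * c - a := pos_of_mul_pos_right (hprod ▸ by positivity) ha.le
  exact ⟨hpos, hb, hc, by linear_combination h⟩

theorem vieta₁_lt (h : IsMarkovTriple a b c) (hcb : c ≤ b) (hba : b ≤ a) (ha : a ≠ 1) :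
    3 * b * c - a < a := by
  obtain ⟨-, -, hc, h⟩ := h
  by_contra! hle
  -- `(a - b) * (a' - b)` is the value at `b` of the quadratic with roots `a` and `a' = 3bc - a`.
  have hvalue : (a - b) * (3 * b * c - a - b) = 2 * b ^ 2 + c ^ 2 - 3 * b ^ 2 * c := by
    linear_combination -h
  have hnonneg : 0 ≤ (a - b) * (3 * b * c - a - b) := mul_nonneg (by linarith) (by linarith)
  obtain rfl : c = 1 := by nlinarith
  obtain rfl : b = 1 := by nlinarith
  omega

theorem reachable_of_sum_le (n : ℕ) :
    ∀ a b c : ℤ, IsMarkovTriple a b c → a + b + c ≤ n →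
      Relation.ReflTransGen MarkovStep (1, 1, 1) (a, b, c) := by
  induction n using Nat.strong_induction_on with
  | _ n ih =>
  refine forall_of_sorted (fun h hm hn => ?_) (fun h hm hn => ?_)
    (@fun a b c hcb hba hm hn => ?_)
  · exact (h hm.swap₁₂ (by linarith)).tail (MarkovStep.swap₁₂ _ _ _)
  · exact (h hm.swap₂₃ (by linarith)).tail (MarkovStep.swap₂₃ _ _ _)
  · have ⟨_, hb, hc, _⟩ := hm
    obtain rfl | ha := eq_or_ne a 1
    · obtain ⟨rfl, rfl⟩ : b = 1 ∧ c = 1 := by omega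
      exact .refl
    · have hlt := hm.vieta₁_lt hcb hba ha
      exact (ih (n - 1) (by omega) _ b c hm.vieta₁ (by omega)).tail (MarkovStep.vieta₁ a b c)

end IsMarkovTriple

/-- Every positive integer solution of x^2+y^2+z^2 = 3xyz is obtained from
(1,1,1) by a finite sequence of Vieta moves and permutations. -/
theorem markov_reachable (a b c : ℤ) (ha : 0 < a) (hb : 0 < b) (hc : 0 < c)
    (h : a ^ 2 + b ^ 2 + c ^ 2 = 3 * a * b * c) :
    Relation.ReflTransGen MarkovStep (1, 1, 1) (a, b, c) :=
  IsMarkovTriple.reachable_of_sum_le _ a b c ⟨ha, hb, hc, h⟩ (Int.self_le_toNat _)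
end
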